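/- (Division property in the positive definite case.) Let Q(v)=v₁²+v₂²+v₃² be positive definite (signature (3,0)). Then the norm is anisotropic: N(x) = 0 implies x = 0; consequently the octonionic product has no zero divisors: for all x, y ∈ G = CliffordAlgebra Q, x • y = 0 implies x = 0 or y = 0. -/
import Mathlib


open CliffordAlgebra

/-- The diagonal quadratic form on `ℝ³` with weights `l`. -/
noncomputable def Qf (l : Fin 3 → ℝ) : QuadraticForm ℝ (Fin 3 → ℝ) :=
  QuadraticMap.weightedSumSquares ℝ l

/-- The octonionic product `x • y` of `x = x₊ + x₋` and `y = y₊ + y₋`, expressed in terms of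
the even/odd parts: `x • y = x₊y₊ - (reverse y₋)x₋ + y₋x₊ + x₋(reverse y₊)`. -/
noncomputable def octMul {R M : Type*} [CommRing R] [AddCommGroup M] [Module R M]
    (Q : QuadraticForm R M) (xp xm yp ym : CliffordAlgebra Q) : CliffordAlgebra Q :=
  xp * yp - reverse ym * xm + ym * xp + xm * reverse yp

/-- The octonionic norm `N(x) = x • x*`, where `x* = reverse x₊ - x₋` is the full grade
inversion of `x = x₊ + x₋`. -/
noncomputable def octNorm {R M : Type*} [CommRing R] [AddCommGroup M] [Module R M]
    (Q : QuadraticForm R M) (xp xm : CliffordAlgebra Q) : CliffordAlgebra Q :=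
  octMul Q xp xm (reverse xp) (-xm)

/-- The quadratic form `Q(v) = v₁² + v₂² + v₃²` on `ℝ³` (signature (3,0)). -/
noncomputable def Q30 : QuadraticForm ℝ (Fin 3 → ℝ) :=
  QuadraticMap.weightedSumSquares ℝ ![(1 : ℝ), 1, 1]

namespace OctDivAux

open Complex

noncomputable def e (i : Fin 3) : CliffordAlgebra Q30 := ι Q30 (Pi.single i 1)

lemma Q30_single (i : Fin 3) : Q30 (Pi.single i 1) = 1 := by
  fin_cases i <;>
    simp [Q30, QuadraticMap.weightedSumSquares_apply, Fin.sum_univ_three, Pi.single_apply]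

lemma polar_single (i j : Fin 3) (h : i ≠ j) :
    QuadraticMap.polar Q30 (Pi.single i 1) (Pi.single j 1) = 0 := by
  fin_cases i <;> fin_cases j <;> simp_all [QuadraticMap.polar, Q30,
    QuadraticMap.weightedSumSquares_apply, Fin.sum_univ_three, Pi.single_apply]

lemma ee (i : Fin 3) : e i * e i = 1 := by
  rw [e, ι_sq_scalar, Q30_single, map_one]

lemma eex (i : Fin 3) (x : CliffordAlgebra Q30) : e i * (e i * x) = x := by
  rw [← mul_assoc, ee, one_mul]

lemma eswap (i j : Fin 3) (h : i ≠ j) : e j * e i = -(e i * e j) := by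
  have h2 := ι_mul_ι_add_swap (Q := Q30) (Pi.single i 1) (Pi.single j 1)
  rw [polar_single i j h, map_zero] at h2
  rw [e, e, eq_neg_iff_add_eq_zero, add_comm]
  exact h2

lemma eswapx (i j : Fin 3) (h : i ≠ j) (x : CliffordAlgebra Q30) :
    e j * (e i * x) = -(e i * (e j * x)) := by
  rw [← mul_assoc, eswap i j h, ← mul_assoc, neg_mul]

lemma s10 : e 1 * e 0 = -(e 0 * e 1) := eswap 0 1 (by decide)
lemma s20 : e 2 * e 0 = -(e 0 * e 2) := eswap 0 2 (by decide)
lemma s21 : e 2 * e 1 = -(e 1 * e 2) := eswap 1 2 (by decide)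
lemma s10x (x : CliffordAlgebra Q30) : e 1 * (e 0 * x) = -(e 0 * (e 1 * x)) := eswapx 0 1 (by decide) x
lemma s20x (x : CliffordAlgebra Q30) : e 2 * (e 0 * x) = -(e 0 * (e 2 * x)) := eswapx 0 2 (by decide) x
lemma s21x (x : CliffordAlgebra Q30) : e 2 * (e 1 * x) = -(e 1 * (e 2 * x)) := eswapx 1 2 (by decide) x

noncomputable def Sp : Submodule ℝ (CliffordAlgebra Q30) :=
  Submodule.span ℝ {1, e 0 * e 1, e 1 * e 2, e 0 * e 2}
noncomputable def Sm : Submodule ℝ (CliffordAlgebra Q30) :=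
  Submodule.span ℝ {e 0, e 1, e 2, e 0 * (e 1 * e 2)}

lemma mp1 : (1 : CliffordAlgebra Q30) ∈ Sp := Submodule.subset_span (by left; rfl)
lemma mp2 : e 0 * e 1 ∈ Sp := Submodule.subset_span (by right; left; rfl)
lemma mp3 : e 1 * e 2 ∈ Sp := Submodule.subset_span (by right; right; left; rfl)
lemma mp4 : e 0 * e 2 ∈ Sp := Submodule.subset_span (by right; right; right; rfl)
lemma mm1 : e 0 ∈ Sm := Submodule.subset_span (by left; rfl)
lemma mm2 : e 1 ∈ Sm := Submodule.subset_span (by right; left; rfl)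
lemma mm3 : e 2 ∈ Sm := Submodule.subset_span (by right; right; left; rfl)
lemma mm4 : e 0 * (e 1 * e 2) ∈ Sm := Submodule.subset_span (by right; right; right; rfl)

lemma e_mul_Sp (i : Fin 3) (x : CliffordAlgebra Q30) (hx : x ∈ Sp) : e i * x ∈ Sm := by
  induction hx using Submodule.span_induction with
  | mem g hg =>
    have hi : i = 0 ∨ i = 1 ∨ i = 2 := by omega
    simp only [Set.mem_insert_iff, Set.mem_singleton_iff] at hg
    rcases hi with rfl | rfl | rfl <;> rcases hg with rfl | rfl | rfl | rfl <;> (try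
      simp only [mul_one, mul_assoc, ee, eex, s10, s20, s21, s10x, s20x, s21x,
        mul_neg, neg_neg]) <;>
      first
        | exact mm1 | exact mm2 | exact mm3 | exact mm4
        | exact Submodule.neg_mem _ mm1 | exact Submodule.neg_mem _ mm2
        | exact Submodule.neg_mem _ mm3 | exact Submodule.neg_mem _ mm4
  | zero => rw [mul_zero]; exact Submodule.zero_mem _
  | add x y _ _ hx hy => rw [mul_add]; exact Submodule.add_mem _ hx hy
  | smul r x _ hx => rw [mul_smul_comm]; exact Submodule.smul_mem _ _ hx

lemma e_mul_Sm (i : Fin 3) (x : CliffordAlgebra Q30) (hx : x ∈ Sm) : e i * x ∈ Sp := by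
  induction hx using Submodule.span_induction with
  | mem g hg =>
    have hi : i = 0 ∨ i = 1 ∨ i = 2 := by omega
    simp only [Set.mem_insert_iff, Set.mem_singleton_iff] at hg
    rcases hi with rfl | rfl | rfl <;> rcases hg with rfl | rfl | rfl | rfl <;> (try
      simp only [mul_one, mul_assoc, ee, eex, s10, s20, s21, s10x, s20x, s21x,
        mul_neg, neg_neg]) <;>
      first
        | exact mp1 | exact mp2 | exact mp3 | exact mp4
        | exact Submodule.neg_mem _ mp1 | exact Submodule.neg_mem _ mp2
        | exact Submodule.neg_mem _ mp3 | exact Submodule.neg_mem _ mp4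
  | zero => rw [mul_zero]; exact Submodule.zero_mem _
  | add x y _ _ hx hy => rw [mul_add]; exact Submodule.add_mem _ hx hy
  | smul r x _ hx => rw [mul_smul_comm]; exact Submodule.smul_mem _ _ hx

lemma ι_eq (m : Fin 3 → ℝ) : ι Q30 m = m 0 • e 0 + m 1 • e 1 + m 2 • e 2 := by
  have h : m = m 0 • (Pi.single 0 1 : Fin 3 → ℝ) + m 1 • (Pi.single 1 1 : Fin 3 → ℝ)
      + m 2 • (Pi.single 2 1 : Fin 3 → ℝ) := by
    funext j; fin_cases j <;> simp [Pi.single_apply]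
  conv_lhs => rw [h]
  simp [e, map_add, map_smul]

lemma ι_mul_Sp (m : Fin 3 → ℝ) (x : CliffordAlgebra Q30) (hx : x ∈ Sp) : ι Q30 m * x ∈ Sm := by
  rw [ι_eq, add_mul, add_mul, smul_mul_assoc, smul_mul_assoc, smul_mul_assoc]
  exact Submodule.add_mem _ (Submodule.add_mem _
    (Submodule.smul_mem _ _ (e_mul_Sp 0 x hx)) (Submodule.smul_mem _ _ (e_mul_Sp 1 x hx)))
    (Submodule.smul_mem _ _ (e_mul_Sp 2 x hx))

lemma ι_mul_Sm (m : Fin 3 → ℝ) (x : CliffordAlgebra Q30) (hx : x ∈ Sm) : ι Q30 m * x ∈ Sp := by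
  rw [ι_eq, add_mul, add_mul, smul_mul_assoc, smul_mul_assoc, smul_mul_assoc]
  exact Submodule.add_mem _ (Submodule.add_mem _
    (Submodule.smul_mem _ _ (e_mul_Sm 0 x hx)) (Submodule.smul_mem _ _ (e_mul_Sm 1 x hx)))
    (Submodule.smul_mem _ _ (e_mul_Sm 2 x hx))

lemma even_mem_Sp (x : CliffordAlgebra Q30) (hx : x ∈ evenOdd Q30 0) : x ∈ Sp := by
  induction x, hx using even_induction with
  | algebraMap r =>
    rw [Algebra.algebraMap_eq_smul_one]
    exact Submodule.smul_mem _ _ mp1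
  | add x y hx hy ihx ihy => exact Submodule.add_mem _ ihx ihy
  | ι_mul_ι_mul m₁ m₂ x hx ih =>
    rw [mul_assoc]; exact ι_mul_Sm m₁ _ (ι_mul_Sp m₂ x ih)

lemma odd_mem_Sm (x : CliffordAlgebra Q30) (hx : x ∈ evenOdd Q30 1) : x ∈ Sm := by
  induction x, hx using odd_induction with
  | ι v =>
    rw [ι_eq]
    exact Submodule.add_mem _ (Submodule.add_mem _
      (Submodule.smul_mem _ _ mm1) (Submodule.smul_mem _ _ mm2)) (Submodule.smul_mem _ _ mm3)
  | add x y hx hy ihx ihy => exact Submodule.add_mem _ ihx ihy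
  | ι_mul_ι_mul m₁ m₂ x hx ih =>
    rw [mul_assoc]; exact ι_mul_Sp m₁ _ (ι_mul_Sm m₂ x ih)

lemma span4 {v1 v2 v3 v4 x : CliffordAlgebra Q30}
    (h : x ∈ Submodule.span ℝ {v1, v2, v3, v4}) :
    ∃ a b c d : ℝ, x = a • v1 + b • v2 + c • v3 + d • v4 := by
  rw [Submodule.mem_span_insert] at h
  obtain ⟨a, z, hz, rfl⟩ := h
  rw [Submodule.mem_span_insert] at hz
  obtain ⟨b, w, hw, rfl⟩ := hz
  rw [Submodule.mem_span_insert] at hw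
  obtain ⟨c, u, hu, rfl⟩ := hw
  rw [Submodule.mem_span_singleton] at hu
  obtain ⟨d, rfl⟩ := hu
  exact ⟨a, b, c, d, by abel⟩

lemma even_exists (x : CliffordAlgebra Q30) (hx : x ∈ evenOdd Q30 0) :
    ∃ a b c d : ℝ, x = a • (1 : CliffordAlgebra Q30) + b • (e 0 * e 1)
      + c • (e 1 * e 2) + d • (e 0 * e 2) :=
  span4 (even_mem_Sp x hx)

lemma odd_exists (x : CliffordAlgebra Q30) (hx : x ∈ evenOdd Q30 1) :
    ∃ a b c d : ℝ, x = a • e 0 + b • e 1 + c • e 2 + d • (e 0 * (e 1 * e 2)) :=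
  span4 (odd_mem_Sm x hx)

noncomputable def sigma : Fin 3 → Matrix (Fin 2) (Fin 2) ℂ
  | 0 => !![0, 1; 1, 0]
  | 1 => !![0, -I; I, 0]
  | 2 => !![1, 0; 0, -1]

noncomputable def pauliFun : (Fin 3 → ℝ) →ₗ[ℝ] Matrix (Fin 2) (Fin 2) ℂ where
  toFun v := v 0 • sigma 0 + v 1 • sigma 1 + v 2 • sigma 2
  map_add' a b := by simp only [Pi.add_apply, add_smul]; abel
  map_smul' r a := by
    simp only [Pi.smul_apply, smul_eq_mul, mul_smul, RingHom.id_apply, smul_add]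

lemma pauliFun_apply (v : Fin 3 → ℝ) :
    pauliFun v = v 0 • sigma 0 + v 1 • sigma 1 + v 2 • sigma 2 := rfl

lemma pauli_sq (v : Fin 3 → ℝ) :
    pauliFun v * pauliFun v = algebraMap ℝ (Matrix (Fin 2) (Fin 2) ℂ) (Q30 v) := by
  rw [Algebra.algebraMap_eq_smul_one]
  ext i j
  fin_cases i <;> fin_cases j <;>
    simp [pauliFun_apply, sigma, Matrix.mul_apply, Fin.sum_univ_two, Q30,
      QuadraticMap.weightedSumSquares_apply, Fin.sum_univ_three, Matrix.one_apply,
      Complex.real_smul, Complex.ext_iff] <;> (try constructor) <;> first | trivial | ring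

noncomputable def φ : CliffordAlgebra Q30 →ₐ[ℝ] Matrix (Fin 2) (Fin 2) ℂ :=
  CliffordAlgebra.lift Q30 ⟨pauliFun, pauli_sq⟩

lemma φ_e (i : Fin 3) : φ (e i) = sigma i := by
  have hi : i = 0 ∨ i = 1 ∨ i = 2 := by omega
  rcases hi with rfl | rfl | rfl <;>
    · rw [e, φ, lift_ι_apply, pauliFun_apply]
      simp [Pi.single_apply]

lemma rev_e (i : Fin 3) : reverse (e i) = e i := reverse_ι _

end OctDivAux

namespace OctDivAux

lemma sq8 {c0 c1 c2 c3 c4 c5 c6 c7 : ℝ}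
    (h : c0^2 + c1^2 + c2^2 + c3^2 + c4^2 + c5^2 + c6^2 + c7^2 = 0) :
    c0 = 0 ∧ c1 = 0 ∧ c2 = 0 ∧ c3 = 0 ∧ c4 = 0 ∧ c5 = 0 ∧ c6 = 0 ∧ c7 = 0 := by
  refine ⟨?_, ?_, ?_, ?_, ?_, ?_, ?_, ?_⟩ <;>
    nlinarith [sq_nonneg c0, sq_nonneg c1, sq_nonneg c2, sq_nonneg c3, sq_nonneg c4,
      sq_nonneg c5, sq_nonneg c6, sq_nonneg c7]

end OctDivAux


open OctDivAux Complex

set_option maxHeartbeats 2000000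

/-- (Division property in the positive definite case.) For the positive definite form of
signature (3,0), the octonionic norm is anisotropic: `N(x) = 0 → x = 0`; consequently the
octonionic product has no zero divisors: `x • y = 0 → x = 0 ∨ y = 0`
(elements are given by their even/odd decompositions `x = x₊ + x₋`, `y = y₊ + y₋`). -/
theorem octonion_division :
    (∀ xp xm : CliffordAlgebra Q30, xp ∈ evenOdd Q30 0 → xm ∈ evenOdd Q30 1 →
      octNorm Q30 xp xm = 0 → xp + xm = 0) ∧
    (∀ xp xm yp ym : CliffordAlgebra Q30,
      xp ∈ evenOdd Q30 0 → xm ∈ evenOdd Q30 1 →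
      yp ∈ evenOdd Q30 0 → ym ∈ evenOdd Q30 1 →
      octMul Q30 xp xm yp ym = 0 → xp + xm = 0 ∨ yp + ym = 0) := by
  constructor
  · intro xp xm hxp hxm h
    obtain ⟨a0, a12, a23, a13, rfl⟩ := even_exists xp hxp
    obtain ⟨a1, a2, a3, a7, rfl⟩ := odd_exists xm hxm
    simp only [octNorm, octMul, map_add, map_smul, map_neg, reverse.map_mul,
      rev_e, reverse.map_one, reverse_reverse] at h
    have h2 := congrArg φ h
    simp only [map_add, map_sub, map_mul, map_neg, map_smul, map_zero, map_one, φ_e] at h2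
    have h00 := congrFun (congrFun h2 0) 0
    simp [sigma, Matrix.mul_apply, Matrix.vecMul, dotProduct, Matrix.vecHead, Matrix.vecTail,
      Fin.sum_univ_two, Matrix.one_apply, Complex.real_smul, Complex.ext_iff] at h00
    obtain ⟨hre, -⟩ := h00
    have g : a0^2 + a12^2 + a23^2 + a13^2 + a1^2 + a2^2 + a3^2 + a7^2 = 0 := by
      linear_combination hre
    obtain ⟨ha0, ha12, ha23, ha13, ha1, ha2, ha3, ha7⟩ := sq8 g
    rw [ha0, ha12, ha23, ha13, ha1, ha2, ha3, ha7]
    simp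
  · intro xp xm yp ym hxp hxm hyp hym h
    obtain ⟨a0, a12, a23, a13, rfl⟩ := even_exists xp hxp
    obtain ⟨a1, a2, a3, a7, rfl⟩ := odd_exists xm hxm
    obtain ⟨b0, b12, b23, b13, rfl⟩ := even_exists yp hyp
    obtain ⟨b1, b2, b3, b7, rfl⟩ := odd_exists ym hym
    simp only [octMul, map_add, map_smul, map_neg, reverse.map_mul,
      rev_e, reverse.map_one] at h
    have h2 := congrArg φ h
    simp only [map_add, map_sub, map_mul, map_neg, map_smul, map_zero, map_one, φ_e] at h2
    have h00 := congrFun (congrFun h2 0) 0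
    simp [sigma, Matrix.mul_apply, Matrix.vecMul, dotProduct, Matrix.vecHead, Matrix.vecTail,
      Fin.sum_univ_two, Matrix.one_apply, Complex.real_smul, Complex.ext_iff] at h00
    obtain ⟨h00re, h00im⟩ := h00
    have h01 := congrFun (congrFun h2 0) 1
    simp [sigma, Matrix.mul_apply, Matrix.vecMul, dotProduct, Matrix.vecHead, Matrix.vecTail,
      Fin.sum_univ_two, Matrix.one_apply, Complex.real_smul, Complex.ext_iff] at h01
    obtain ⟨h01re, h01im⟩ := h01
    have h10 := congrFun (congrFun h2 1) 0
    simp [sigma, Matrix.mul_apply, Matrix.vecMul, dotProduct, Matrix.vecHead, Matrix.vecTail,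
      Fin.sum_univ_two, Matrix.one_apply, Complex.real_smul, Complex.ext_iff] at h10
    obtain ⟨h10re, h10im⟩ := h10
    have h11 := congrFun (congrFun h2 1) 1
    simp [sigma, Matrix.mul_apply, Matrix.vecMul, dotProduct, Matrix.vecHead, Matrix.vecTail,
      Fin.sum_univ_two, Matrix.one_apply, Complex.real_smul, Complex.ext_iff] at h11
    obtain ⟨h11re, h11im⟩ := h11
    have g1 : a0*b0 + a0*b3 - a1*b1 - a1*b13 - a12*b12 - a12*b7 + a13*b1 - a13*b13 - a2*b2 - a2*b23 + a23*b2 - a23*b23 + a3*b0 - a3*b3 + a7*b12 - a7*b7 = 0 := by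
      first | linear_combination h00re | linear_combination -h00re
    have g2 : a0*b12 + a0*b7 + a1*b2 - a1*b23 + a12*b0 + a12*b3 - a13*b2 - a13*b23 - a2*b1 + a2*b13 + a23*b1 + a23*b13 - a3*b12 + a3*b7 + a7*b0 - a7*b3 = 0 := by
      first | linear_combination h00im | linear_combination -h00im
    have g3 : a0*b1 - a0*b13 + a1*b0 - a1*b3 - a12*b2 - a12*b23 - a13*b0 - a13*b3 + a2*b12 + a2*b7 + a23*b12 - a23*b7 + a3*b1 + a3*b13 - a7*b2 + a7*b23 = 0 := by
      first | linear_combination h01re | linear_combination -h01re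
    have g4 : -a0*b2 + a0*b23 + a1*b12 + a1*b7 - a12*b1 - a12*b13 + a13*b12 - a13*b7 - a2*b0 + a2*b3 + a23*b0 + a23*b3 - a3*b2 - a3*b23 - a7*b1 + a7*b13 = 0 := by
      first | linear_combination h01im | linear_combination -h01im
    have g5 : a0*b1 + a0*b13 + a1*b0 + a1*b3 - a12*b2 + a12*b23 + a13*b0 - a13*b3 + a2*b12 - a2*b7 - a23*b12 - a23*b7 - a3*b1 + a3*b13 + a7*b2 + a7*b23 = 0 := by
      first | linear_combination h10re | linear_combination -h10re
    have g6 : a0*b2 + a0*b23 - a1*b12 + a1*b7 + a12*b1 - a12*b13 + a13*b12 + a13*b7 + a2*b0 + a2*b3 + a23*b0 - a23*b3 - a3*b2 + a3*b23 - a7*b1 - a7*b13 = 0 := by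
      first | linear_combination h10im | linear_combination -h10im
    have g7 : a0*b0 - a0*b3 - a1*b1 + a1*b13 - a12*b12 + a12*b7 - a13*b1 - a13*b13 - a2*b2 + a2*b23 - a23*b2 - a23*b23 - a3*b0 - a3*b3 - a7*b12 - a7*b7 = 0 := by
      first | linear_combination h11re | linear_combination -h11re
    have g8 : -a0*b12 + a0*b7 - a1*b2 - a1*b23 - a12*b0 + a12*b3 - a13*b2 + a13*b23 + a2*b1 + a2*b13 + a23*b1 - a23*b13 - a3*b12 - a3*b7 + a7*b0 + a7*b3 = 0 := by
      first | linear_combination h11im | linear_combination -h11im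
    have key : (a0^2 + a12^2 + a23^2 + a13^2 + a1^2 + a2^2 + a3^2 + a7^2) * (b0^2 + b12^2 + b23^2 + b13^2 + b1^2 + b2^2 + b3^2 + b7^2) = 0 := by
      linear_combination ((a0*b0 + a0*b3 - a1*b1 - a1*b13 - a12*b12 - a12*b7 + a13*b1 - a13*b13 - a2*b2 - a2*b23 + a23*b2 - a23*b23 + a3*b0 - a3*b3 + a7*b12 - a7*b7)/2) * g1 + ((a0*b12 + a0*b7 + a1*b2 - a1*b23 + a12*b0 + a12*b3 - a13*b2 - a13*b23 - a2*b1 + a2*b13 + a23*b1 + a23*b13 - a3*b12 + a3*b7 + a7*b0 - a7*b3)/2) * g2 + ((a0*b1 - a0*b13 + a1*b0 - a1*b3 - a12*b2 - a12*b23 - a13*b0 - a13*b3 + a2*b12 + a2*b7 + a23*b12 - a23*b7 + a3*b1 + a3*b13 - a7*b2 + a7*b23)/2) * g3 + ((-a0*b2 + a0*b23 + a1*b12 + a1*b7 - a12*b1 - a12*b13 + a13*b12 - a13*b7 - a2*b0 + a2*b3 + a23*b0 + a23*b3 - a3*b2 - a3*b23 - a7*b1 + a7*b13)/2) * g4 +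 ((a0*b1 + a0*b13 + a1*b0 + a1*b3 - a12*b2 + a12*b23 + a13*b0 - a13*b3 + a2*b12 - a2*b7 - a23*b12 - a23*b7 - a3*b1 + a3*b13 + a7*b2 + a7*b23)/2) * g5 + ((a0*b2 + a0*b23 - a1*b12 + a1*b7 + a12*b1 - a12*b13 + a13*b12 + a13*b7 + a2*b0 + a2*b3 + a23*b0 - a23*b3 - a3*b2 + a3*b23 - a7*b1 - a7*b13)/2) * g6 + ((a0*b0 - a0*b3 - a1*b1 + a1*b13 - a12*b12 + a12*b7 - a13*b1 - a13*b13 - a2*b2 + a2*b23 - a23*b2 - a23*b23 - a3*b0 - a3*b3 - a7*b12 - a7*b7)/2) * g7 + ((-a0*b12 + a0*b7 - a1*b2 - a1*b23 - a12*b0 + a12*b3 - a13*b2 + a13*b23 + a2*b1 + a2*b13 + a23*b1 - a23*b13 - a3*b12 - a3*b7 + a7*b0 + a7*b3)/2) * g8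
    rcases mul_eq_zero.mp key with hN | hN
    · left
      obtain ⟨ha0, ha12, ha23, ha13, ha1, ha2, ha3, ha7⟩ := sq8 hN
      rw [ha0, ha12, ha23, ha13, ha1, ha2, ha3, ha7]
      simp
    · right
      obtain ⟨hb0, hb12, hb23, hb13, hb1, hb2, hb3, hb7⟩ := sq8 hN
      rw [hb0, hb12, hb23, hb13, hb1, hb2, hb3, hb7]
      simp
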